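/- Dead assignment elimination is semantics-preserving with respect to live-out variables: in a straight-line program, deleting an assignment 'v := e' such that v is not read by any later statement and v is not in the set of output variables yields a program whose final store agrees with the original on all output variables, for every initial store. -/

import Mathlib

inductive Expr (Var : Type) where
  | var : Var → Expr Var
  | const : ℤ → Expr Var
  | add : Expr Var → Expr Var → Expr Var
  | sub : Expr Var → Expr Var → Expr Var
  | mul : Expr Var → Expr Var → Expr Var

def Expr.eval {Var : Type} (σ : Var → ℤ) : Expr Var → ℤ
  | .var x => σ x
  | .const n => n
  | .add a b => a.eval σ + b.eval σ
  | .sub a b => a.eval σ - b.eval σ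
  | .mul a b => a.eval σ * b.eval σ

/-- `v` occurs (is read) in an expression. -/
def Expr.occurs {Var : Type} (v : Var) : Expr Var → Prop
  | .var x => x = v
  | .const _ => False
  | .add a b => a.occurs v ∨ b.occurs v
  | .sub a b => a.occurs v ∨ b.occurs v
  | .mul a b => a.occurs v ∨ b.occurs v

def run {Var : Type} [DecidableEq Var] : List (Var × Expr Var) → (Var → ℤ) → (Var → ℤ)
  | [], σ => σ
  | (v, e) :: p, σ => run p (Function.update σ v (e.eval σ))

/-! A dead assignment `v := e` only changes the store at `v`, and since no later statement
reads `v`, two stores that agree off `v` stay in agreement off `v` through the rest of the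
program; the output variables lie off `v`. -/

theorem Expr.eval_congr {Var : Type} {σ σ' : Var → ℤ} :
    ∀ e : Expr Var, Set.EqOn σ σ' {x | e.occurs x} → e.eval σ = e.eval σ'
  | .var x, h => h rfl
  | .const _, _ => rfl
  | .add a b, h | .sub a b, h | .mul a b, h => by
    simp only [Expr.eval,
      a.eval_congr (h.mono fun _ => Or.inl), b.eval_congr (h.mono fun _ => Or.inr)]

theorem Set.EqOn.update {α β : Type} [DecidableEq α] {f g : α → β} {s : Set α}
    (h : Set.EqOn f g s) (a : α) (b : β) :
    Set.EqOn (Function.update f a b) (Function.update g a b) s := by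
  intro x hx
  rcases eq_or_ne x a with rfl | hne
  · simp only [Function.update_self]
  · simp only [Function.update_of_ne hne, h hx]

theorem run_append {Var : Type} [DecidableEq Var] (p q : List (Var × Expr Var))
    (σ : Var → ℤ) : run (p ++ q) σ = run q (run p σ) := by
  induction p generalizing σ with
  | nil => rfl
  | cons s p ih => exact ih _

theorem run_eqOn_compl_of_not_occurs {Var : Type} [DecidableEq Var] {v : Var}
    {p : List (Var × Expr Var)} (hp : ∀ s ∈ p, ¬ s.2.occurs v) {σ σ' : Var → ℤ}
    (h : Set.EqOn σ σ' {v}ᶜ) : Set.EqOn (run p σ) (run p σ') {v}ᶜ := by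
  induction p generalizing σ σ' with
  | nil => exact h
  | cons s p ih =>
    obtain ⟨w, f⟩ := s
    have hf : f.eval σ = f.eval σ' :=
      f.eval_congr (h.mono fun x hx (hxv : x = v) => hp _ List.mem_cons_self (hxv ▸ hx))
    rw [run, run, hf]
    exact ih (fun s hs => hp s (List.mem_cons_of_mem _ hs)) (h.update w _)

/-- Dead assignment elimination is semantics-preserving w.r.t. live-out
variables: deleting `v := e` when `v` is not read by any later statement and
`v` is not an output variable leaves the final store unchanged on every
output variable, for every initial store. -/
theorem deadAssignElim_preserves_outputs {Var : Type} [DecidableEq Var]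
    (p₁ p₂ : List (Var × Expr Var)) (v : Var) (e : Expr Var) (O : Set Var)
    (hnotRead : ∀ s ∈ p₂, ¬ s.2.occurs v)
    (hnotOut : v ∉ O) :
    ∀ σ : Var → ℤ, ∀ u ∈ O,
      run (p₁ ++ [(v, e)] ++ p₂) σ u = run (p₁ ++ p₂) σ u := by
  intro σ u hu
  set τ := run p₁ σ
  have hdead : Set.EqOn (run [(v, e)] τ) τ {v}ᶜ := fun x hx =>
    Function.update_of_ne hx _ _
  rw [run_append, run_append, run_append]
  exact run_eqOn_compl_of_not_occurs hnotRead hdead fun huv => hnotOut (huv ▸ hu)
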